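/- Let a < t, c < s, and let α, β : ℝ × ℝ → (0,∞) define variable-order Riemann–Liouville integrals. If f is nondecreasing and g is nondecreasing on the union of the intervals, and a = c, s = t, then I_a^β[y ↦ I_a^α[x ↦ (f(x)−f(y))(g(x)−g(y))](t)](t) ≥ 0, and consequently (I_a^α(fg))(t)·(I_a^β 1)(t) + (I_a^α 1)(t)·(I_a^β(fg))(t) ≥ (I_a^α g)(t)·(I_a^β f)(t) + (I_a^α f)(t)·(I_a^β g)(t). -/
import Mathlib


open MeasureTheory

/-- The left Riemann–Liouville variable-order fractional integral
`(I_a^{α(·,·)} f)(t) = ∫_a^t (t-x)^{α(t,x)-1} f(x) / Γ(α(t,x)) dx`. -/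
noncomputable def RL (α : ℝ → ℝ → ℝ) (a t : ℝ) (f : ℝ → ℝ) : ℝ :=
  ∫ x in a..t, (t - x) ^ (α t x - 1) / Real.Gamma (α t x) * f x

/-- `f` is integrable against the variable-order Riemann–Liouville kernel on `(a,t)`. -/
def RLIntegrable (α : ℝ → ℝ → ℝ) (a t : ℝ) (f : ℝ → ℝ) : Prop :=
  IntervalIntegrable (fun x => (t - x) ^ (α t x - 1) / Real.Gamma (α t x) * f x) volume a t

lemma ker_nonneg (α : ℝ → ℝ → ℝ) (hα : ∀ p q : ℝ, 0 < α p q) (t x : ℝ) (hx : x ≤ t) :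
    0 ≤ (t - x) ^ (α t x - 1) / Real.Gamma (α t x) :=
  div_nonneg (Real.rpow_nonneg (by linarith) _) (Real.Gamma_pos_of_pos (hα t x)).le

lemma RL_expand (α : ℝ → ℝ → ℝ) (a t c₁ c₂ : ℝ) (f g : ℝ → ℝ)
    (hfg : RLIntegrable α a t (fun x => f x * g x))
    (hf : RLIntegrable α a t f) (hg : RLIntegrable α a t g)
    (h1 : RLIntegrable α a t (fun _ => 1)) :
    RL α a t (fun x => (f x - c₁) * (g x - c₂)) =
      RL α a t (fun x => f x * g x) - c₂ * RL α a t f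
        - c₁ * RL α a t g + c₁ * c₂ * RL α a t (fun _ => 1) := by
  unfold RL
  have key : (fun x => (t - x) ^ (α t x - 1) / Real.Gamma (α t x) *
      ((f x - c₁) * (g x - c₂))) =
      fun x => (((t - x) ^ (α t x - 1) / Real.Gamma (α t x) * (f x * g x))
        - c₂ * ((t - x) ^ (α t x - 1) / Real.Gamma (α t x) * f x)
        - c₁ * ((t - x) ^ (α t x - 1) / Real.Gamma (α t x) * g x))
        + c₁ * c₂ * ((t - x) ^ (α t x - 1) / Real.Gamma (α t x) * 1) := by
    funext x; ring
  rw [key, intervalIntegral.integral_add ((hfg.sub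
      (hf.const_mul c₂)).sub (hg.const_mul c₁)) (h1.const_mul _),
    intervalIntegral.integral_sub (hfg.sub (hf.const_mul c₂)) (hg.const_mul _),
    intervalIntegral.integral_sub hfg (hf.const_mul _),
    intervalIntegral.integral_const_mul, intervalIntegral.integral_const_mul,
    intervalIntegral.integral_const_mul]

theorem RL_chebyshev_monotone
    (a t : ℝ) (α β : ℝ → ℝ → ℝ) (f g : ℝ → ℝ)
    (hat : a < t)
    (hα : ∀ p q : ℝ, 0 < α p q) (hβ : ∀ p q : ℝ, 0 < β p q)
    (hf : Monotone f) (hg : Monotone g)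
    (hfgα : RLIntegrable α a t (fun x => f x * g x))
    (hfgβ : RLIntegrable β a t (fun y => f y * g y))
    (hfα : RLIntegrable α a t f) (hgα : RLIntegrable α a t g)
    (hfβ : RLIntegrable β a t f) (hgβ : RLIntegrable β a t g)
    (h1α : RLIntegrable α a t (fun _ => 1)) (h1β : RLIntegrable β a t (fun _ => 1))
    (hdα : ∀ y : ℝ, RLIntegrable α a t (fun x => (f x - f y) * (g x - g y)))
    (hdβ : RLIntegrable β a t
      (fun y => RL α a t (fun x => (f x - f y) * (g x - g y)))) :
    0 ≤ RL β a t (fun y => RL α a t (fun x => (f x - f y) * (g x - g y))) ∧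
      RL α a t g * RL β a t f + RL α a t f * RL β a t g ≤
        RL α a t (fun x => f x * g x) * RL β a t (fun _ => 1) +
          RL α a t (fun _ => 1) * RL β a t (fun y => f y * g y) := by
  have hprod : ∀ x y : ℝ, 0 ≤ (f x - f y) * (g x - g y) := by
    intro x y
    rcases le_total x y with h | h
    · nlinarith [mul_nonneg (sub_nonneg.2 (hf h)) (sub_nonneg.2 (hg h))]
    · nlinarith [mul_nonneg (sub_nonneg.2 (hf h)) (sub_nonneg.2 (hg h))]
  have hinner : ∀ y : ℝ, 0 ≤ RL α a t (fun x => (f x - f y) * (g x - g y)) := by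
    intro y
    apply intervalIntegral.integral_nonneg hat.le
    intro x hx
    exact mul_nonneg (ker_nonneg α hα t x hx.2) (hprod x y)
  have h0 : 0 ≤ RL β a t (fun y => RL α a t (fun x => (f x - f y) * (g x - g y))) := by
    apply intervalIntegral.integral_nonneg hat.le
    intro y hy
    exact mul_nonneg (ker_nonneg β hβ t y hy.2) (hinner y)
  refine ⟨h0, ?_⟩
  have hinner_eq : ∀ y : ℝ, RL α a t (fun x => (f x - f y) * (g x - g y)) =
      RL α a t (fun x => f x * g x) - g y * RL α a t f - f y * RL α a t g
        + f y * g y * RL α a t (fun _ => 1) :=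
    fun y => RL_expand α a t (f y) (g y) f g hfgα hfα hgα h1α
  have houter : RL β a t (fun y => RL α a t (fun x => (f x - f y) * (g x - g y))) =
      RL α a t (fun x => f x * g x) * RL β a t (fun _ => 1)
        - RL α a t f * RL β a t g - RL α a t g * RL β a t f
        + RL α a t (fun _ => 1) * RL β a t (fun y => f y * g y) := by
    rw [show (fun y => RL α a t (fun x => (f x - f y) * (g x - g y))) =
        fun y => RL α a t (fun x => f x * g x) - g y * RL α a t f - f y * RL α a t g
          + f y * g y * RL α a t (fun _ => 1) from funext hinner_eq]
    unfold RL RLIntegrable at *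
    set Kβ : ℝ → ℝ := fun y => (t - y) ^ (β t y - 1) / Real.Gamma (β t y) with hKβ
    set A := ∫ x in a..t, (t - x) ^ (α t x - 1) / Real.Gamma (α t x) * (f x * g x) with hA
    set B := ∫ x in a..t, (t - x) ^ (α t x - 1) / Real.Gamma (α t x) * f x with hB
    set C := ∫ x in a..t, (t - x) ^ (α t x - 1) / Real.Gamma (α t x) * g x with hC
    set D := ∫ x in a..t, (t - x) ^ (α t x - 1) / Real.Gamma (α t x) * 1 with hD
    have key : (fun y => Kβ y * (A - g y * B - f y * C + f y * g y * D)) =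
        fun y => (A * (Kβ y * 1) - B * (Kβ y * g y) - C * (Kβ y * f y))
          + D * (Kβ y * (f y * g y)) := by
      funext y; ring
    rw [key, intervalIntegral.integral_add
        (((h1β.const_mul A).sub (hgβ.const_mul B)).sub (hfβ.const_mul C))
        (hfgβ.const_mul D),
      intervalIntegral.integral_sub ((h1β.const_mul A).sub (hgβ.const_mul B))
        (hfβ.const_mul C),
      intervalIntegral.integral_sub (h1β.const_mul A) (hgβ.const_mul B),
      intervalIntegral.integral_const_mul, intervalIntegral.integral_const_mul,
      intervalIntegral.integral_const_mul, intervalIntegral.integral_const_mul]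
  rw [houter] at h0
  linarith
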